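/- arXiv:1804.04704 — 3 statements merged into one kernel-verified Lean document; each statement's English description precedes it below -/
import Mathlib

section
/- Suppose ν has a generating sequence Q_0 = X, Q_1 = Y, Q_2, … in which every Q_l is an eigenfunction for H_{i,j,t,x}. Then S^{R_𝔪}(ν) is NOT finitely generated over S^{(A_{i,j,t,x})_𝔫}(ν) if and only if j ≠ n and (n/j) does not divide d(l) for all l ≥ 2. -/
open MvPolynomial Finset Pointwise

noncomputable section

namespace DuttaPaper

/-- The polynomial ring `K[X,Y]`, with `X = X 0` and `Y = X 1`. -/
abbrev Poly (K : Type) [Field K] : Type := MvPolynomial (Fin 2) K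

/-- The rational function field `K(X,Y)`. -/
abbrev RF (K : Type) [Field K] : Type := FractionRing (Poly K)

variable {K : Type} [Field K]

/-- The `K`-algebra endomorphism of `K[X,Y]` sending `X ↦ u • X`, `Y ↦ v • Y`;
this is the action of `(u,v) ∈ 𝕌_m × 𝕌_n` on `K[X,Y]`. -/
def act (u v : K) : Poly K →ₐ[K] Poly K :=
  MvPolynomial.aeval ![MvPolynomial.C u * MvPolynomial.X 0,
    MvPolynomial.C v * MvPolynomial.X 1]

/-- Membership in the set `H_{i,j,t,x} = {(α^{a i}, β^{b j}) : b ≡ a x (mod t)} ⊆ K × K`. -/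
def Hmem (α β : K) (i j t x : ℕ) (p : K × K) : Prop :=
  ∃ a b : ℤ, b ≡ a * (x : ℤ) [ZMOD (t : ℤ)] ∧
    p = (α ^ (a * (i : ℤ)), β ^ (b * (j : ℤ)))

/-- `f ∈ K[X,Y]` is an eigenfunction for `H_{i,j,t,x}`. -/
def IsEigen (α β : K) (i j t x : ℕ) (f : Poly K) : Prop :=
  ∀ p : K × K, Hmem α β i j t x p → ∃ lam : K, act p.1 p.2 f = lam • f

/-- `f ∈ K[X,Y]` belongs to the invariant ring `A_{i,j,t,x} = K[X,Y]^{H_{i,j,t,x}}`. -/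
def Invariant (α β : K) (i j t x : ℕ) (f : Poly K) : Prop :=
  ∀ p : K × K, Hmem α β i j t x p → act p.1 p.2 f = f

/-- A `ℚ`-valued (rational rank 1) valuation on a field `L`: the data of the values of the
nonzero elements (the value of `0` is irrelevant). -/
structure RatVal (L : Type) [Field L] where
  v : L → ℚ
  v_mul : ∀ a b : L, a ≠ 0 → b ≠ 0 → v (a * b) = v a + v b
  v_add : ∀ a b : L, a ≠ 0 → b ≠ 0 → a + b ≠ 0 → min (v a) (v b) ≤ v (a + b)

/-- Value of a polynomial under a valuation of `K(X,Y)`. -/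
def vP (ν : RatVal (RF K)) (f : Poly K) : ℚ :=
  ν.v (algebraMap (Poly K) (RF K) f)

/-- `ν` dominates `R_𝔪 = K[X,Y]_{(X,Y)}` : `ν ≥ 0` on `R_𝔪` and `ν > 0` on its maximal
ideal (expressed on the level of polynomials). -/
def DominatesRm (ν : RatVal (RF K)) : Prop :=
  (∀ f : Poly K, f ≠ 0 → 0 ≤ vP ν f) ∧
  (∀ f : Poly K, f ≠ 0 → MvPolynomial.constantCoeff f = 0 → 0 < vP ν f)

/-- `ν` is non-discrete: its value group is not a cyclic subgroup of `ℚ`. -/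
def Nondiscrete (ν : RatVal (RF K)) : Prop :=
  ¬ ∃ g : ℚ, ∀ z : RF K, z ≠ 0 → ∃ k : ℤ, ν.v z = (k : ℚ) * g

/-- Data of a candidate generating sequence: the polynomials `Q_l` and the numbers `m̄_l`. -/
structure GSData (K : Type) [Field K] where
  Q : ℕ → Poly K
  mbar : ℕ → ℕ

/-- `γ_l = ν(Q_l)`. -/
def GSData.γ (G : GSData K) (ν : RatVal (RF K)) (l : ℕ) : ℚ := vP ν (G.Q l)

/-- `d(l) = m̄_1 ⋯ m̄_{l-1}` (so `d(1) = 1`). -/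
def GSData.d (G : GSData K) (l : ℕ) : ℕ := ∏ k ∈ Finset.Icc 1 (l - 1), G.mbar k

/-- An exponent vector `e` is admissible when `e k < m̄_k` for all `k ≥ 1`. -/
def Adm (G : GSData K) (e : ℕ →₀ ℕ) : Prop := ∀ k, 1 ≤ k → e k < G.mbar k

/-- The monomial `X^{e 0} Q_1^{e 1} Q_2^{e 2} ⋯` in the generating sequence. -/
def Pmon (G : GSData K) (e : ℕ →₀ ℕ) : Poly K := e.prod fun k a => G.Q k ^ a

/-- The value `Σ_k e k • γ_k` of such a monomial. -/
def evalγ (ν : RatVal (RF K)) (G : GSData K) (e : ℕ →₀ ℕ) : ℚ :=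
  e.sum fun k a => (a : ℚ) * G.γ ν k

/-- `(Q_l)_{l≥0}` is a generating sequence for `ν` in `K[X,Y]` (properties (1)–(4) of
Section 2 of the paper, for the algorithm of Cutkosky–Vinh). -/
structure IsGenSeq (ν : RatVal (RF K)) (G : GSData K) : Prop where
  hQ0 : G.Q 0 = MvPolynomial.X 0
  hQ1 : G.Q 1 = MvPolynomial.X 1
  /-- `m̄_l ≥ 1`. -/
  hmbar_pos : ∀ l, 1 ≤ l → 0 < G.mbar l
  /-- `m̄_l γ_l ∈ G(γ_0, …, γ_{l-1})`. -/
  hmbar_mem : ∀ l, 1 ≤ l → ∃ c : ℕ → ℤ,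
      (G.mbar l : ℚ) * G.γ ν l = ∑ k ∈ Finset.range l, (c k : ℚ) * G.γ ν k
  /-- `m̄_l` is minimal with this property. -/
  hmbar_min : ∀ l, 1 ≤ l → ∀ q : ℕ, 0 < q →
      (∃ c : ℕ → ℤ, (q : ℚ) * G.γ ν l = ∑ k ∈ Finset.range l, (c k : ℚ) * G.γ ν k) →
      G.mbar l ≤ q
  /-- (1) `γ_{l+1} > m̄_l γ_l`. -/
  hgrowth : ∀ l, 1 ≤ l → (G.mbar l : ℚ) * G.γ ν l < G.γ ν (l + 1)
  /-- (2) `Q_l = Y^{d(l)} + (terms of lower Y-degree)`. -/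
  hmonic : ∀ l, 1 ≤ l →
      G.Q l - MvPolynomial.X 1 ^ G.d l = 0 ∨
      MvPolynomial.degreeOf 1 (G.Q l - MvPolynomial.X 1 ^ G.d l) < G.d l
  /-- (3), existence and uniqueness of the expansion of any nonzero `f` in terms of the
  admissible monomials `X^{e 0} Q_1^{e 1} ⋯ Q_r^{e r}`, `e k < m̄_k` for `k ≥ 1`. -/
  hexpand : ∀ f : Poly K, f ≠ 0 →
      ∃! c : (ℕ →₀ ℕ) →₀ K,
        (∀ e ∈ c.support, Adm G e) ∧
        f = c.sum fun e a => MvPolynomial.C a * Pmon G e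
  /-- (3), the nonzero terms of the expansion have pairwise distinct values and
  `ν(f)` is the minimum of those values. -/
  hval : ∀ f : Poly K, f ≠ 0 → ∀ c : (ℕ →₀ ℕ) →₀ K,
      (∀ e ∈ c.support, Adm G e) →
      f = (c.sum fun e a => MvPolynomial.C a * Pmon G e) →
      (∀ e ∈ c.support, ∀ e' ∈ c.support, evalγ ν G e = evalγ ν G e' → e = e') ∧
      ∃ e₀ ∈ c.support, vP ν f = evalγ ν G e₀ ∧
        ∀ e ∈ c.support, evalγ ν G e₀ ≤ evalγ ν G e
  /-- (4) `Q_{l+1} = Q_l^{m̄_l} - λ_l X^{c_0} Y^{c_1} Q_2^{c_2} ⋯ Q_{l-1}^{c_{l-1}}` with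
  `0 ≤ c_k < m̄_k` for `k ≥ 1` and `m̄_l γ_l = Σ_{k<l} c_k γ_k`. -/
  hrec : ∀ l, 1 ≤ l → ∃ lam : K, lam ≠ 0 ∧ ∃ cc : ℕ → ℕ,
      (∀ k, 1 ≤ k → k < l → cc k < G.mbar k) ∧
      G.Q (l + 1) =
        G.Q l ^ G.mbar l - MvPolynomial.C lam * ∏ k ∈ Finset.range l, G.Q k ^ cc k ∧
      (G.mbar l : ℚ) * G.γ ν l = ∑ k ∈ Finset.range l, (cc k : ℚ) * G.γ ν k

/-- The valuation semigroup `S^{R_𝔪}(ν) = {ν(h) : 0 ≠ h ∈ R_𝔪}`. -/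
def SRm (ν : RatVal (RF K)) : Set ℚ :=
  {q | ∃ f g : Poly K, f ≠ 0 ∧ MvPolynomial.constantCoeff g ≠ 0 ∧
    q = vP ν f - vP ν g}

/-- The valuation semigroup `S^{(A_{i,j,t,x})_𝔫}(ν)` of the invariant ring localized at
`𝔫 = (X,Y) ∩ A_{i,j,t,x}`. -/
def SA (ν : RatVal (RF K)) (α β : K) (i j t x : ℕ) : Set ℚ :=
  {q | ∃ f g : Poly K, f ≠ 0 ∧ Invariant α β i j t x f ∧ Invariant α β i j t x g ∧
    MvPolynomial.constantCoeff g ≠ 0 ∧ q = vP ν f - vP ν g}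

/-- `S` is a finitely generated module over the subsemigroup `T`:
`S = {s_1, …, s_k} + T` for finitely many `s_i ∈ S`. -/
def FGover (S T : Set ℚ) : Prop :=
  ∃ F : Finset ℚ, (F : Set ℚ) ⊆ S ∧ S = (F : Set ℚ) + T

/-!
Every nonzero `f ∈ K[X,Y]` has a unique expansion in the monomials `X^{e_0} Q_1^{e_1} Q_2^{e_2} ⋯`,
and `ν(f)` is the value `Σ e_k γ_k` of one of them. Since the `Q_l` are eigenfunctions, `H` scales
each monomial by a character, so by uniqueness an invariant `f` involves only invariant monomials.
Hence `S^{R_𝔪}(ν)` is the set of all values `Σ e_k γ_k` and `S^{A}(ν)` the set of values of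
invariant monomials; a monomial is invariant as soon as `(m/i) ∣ e_0` and `(n/j) ∣ e_k d(k)`.

If `(n/j) ∣ d(l₀)` (e.g. `j = n`), reducing `e_0` modulo `m/i` and `e_k`, `0 < k < l₀`, modulo
`n/j` leaves an invariant monomial, so finitely many values generate. Otherwise no `Q_L`, `L ≥ 2`,
is invariant (test against `(u, β^j) ∈ H`); when `m̄_L ≥ 2`, `Q_L` is the only monomial of value
`γ_L`, so `γ_L` must be one of the generators, and non-discreteness of `ν` gives infinitely many
such `L`.
-/

lemma _root_.Rat.exists_forall_mem_zmultiples (s : Finset ℚ) :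
    ∃ g : ℚ, ∀ q ∈ s, q ∈ AddSubgroup.zmultiples g := by
  refine ⟨((∏ q ∈ s, q.den : ℕ) : ℚ)⁻¹, fun q hq => ?_⟩
  obtain ⟨c, hc⟩ := dvd_prod_of_mem (fun q : ℚ => q.den) hq
  have hc0 : (c : ℚ) ≠ 0 := by
    rintro h
    simp_all [prod_eq_zero_iff]
  refine ⟨q.num * c, ?_⟩
  simp only [hc, zsmul_eq_mul]
  push_cast
  rw [mul_inv, mul_mul_mul_comm, mul_inv_cancel₀ hc0, mul_one, ← div_eq_mul_inv, Rat.num_div_den]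

lemma _root_.Finsupp.exists_eq_add_of_lt_of_dvd {ι : Type*} (M : ι → ℕ) (hM : ∀ k, 0 < M k)
    (e : ι →₀ ℕ) : ∃ r e' : ι →₀ ℕ, e = r + e' ∧ (∀ k, r k < M k) ∧ ∀ k, M k ∣ e' k := by
  let r : ι →₀ ℕ := Finsupp.onFinset e.support (fun k => e k % M k) fun k hk =>
    Finsupp.mem_support_iff.2 fun h => hk (by rw [h, Nat.zero_mod])
  have hr : ∀ k, r k = e k % M k := fun _ => rfl
  refine ⟨r, e - r, (add_tsub_cancel_of_le (Finsupp.le_def.2 fun k => ?_)).symm, fun k => ?_,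
    fun k => ?_⟩
  · rw [hr]
    exact Nat.mod_le _ _
  · rw [hr]
    exact Nat.mod_lt _ (hM k)
  · rw [Finsupp.tsub_apply, hr]
    exact Nat.dvd_sub_mod _

lemma _root_.Finsupp.add_eq_single_one {ι : Type*} {a b : ι →₀ ℕ} {L : ι}
    (h : a + b = Finsupp.single L 1) :
    (a = Finsupp.single L 1 ∧ b = 0) ∨ (a = 0 ∧ b = Finsupp.single L 1) := by
  classical
  have hk : ∀ k, a k + b k = Finsupp.single L 1 k := fun k => by rw [← Finsupp.add_apply, h]
  have hoff : ∀ k, k ≠ L → a k = 0 ∧ b k = 0 := fun k hkL => by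
    have := hk k
    rw [Finsupp.single_eq_of_ne hkL] at this
    omega
  have hL := hk L
  rw [Finsupp.single_eq_same] at hL
  rcases Nat.add_eq_one_iff.1 hL with ⟨ha, hb⟩ | ⟨ha, hb⟩
  · refine Or.inr ⟨Finsupp.ext fun k => ?_, Finsupp.ext fun k => ?_⟩ <;>
      rcases eq_or_ne k L with rfl | hkL <;> simp_all
  · refine Or.inl ⟨Finsupp.ext fun k => ?_, Finsupp.ext fun k => ?_⟩ <;>
      rcases eq_or_ne k L with rfl | hkL <;> simp_all

section Valuation

variable (ν : RatVal (RF K))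

lemma algebraMap_poly_ne_zero {f : Poly K} (hf : f ≠ 0) : algebraMap (Poly K) (RF K) f ≠ 0 :=
  (map_ne_zero_iff _ (IsFractionRing.injective (Poly K) (RF K))).2 hf

lemma vP_mul {f g : Poly K} (hf : f ≠ 0) (hg : g ≠ 0) : vP ν (f * g) = vP ν f + vP ν g := by
  rw [vP, map_mul]
  exact ν.v_mul _ _ (algebraMap_poly_ne_zero hf) (algebraMap_poly_ne_zero hg)

lemma vP_one : vP ν (1 : Poly K) = 0 := by
  simpa using vP_mul ν (one_ne_zero (α := Poly K)) one_ne_zero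

lemma vP_pow {f : Poly K} (hf : f ≠ 0) (c : ℕ) : vP ν (f ^ c) = c * vP ν f := by
  induction c with
  | zero => simp [vP_one]
  | succ c ih =>
    rw [pow_succ, vP_mul ν (pow_ne_zero _ hf) hf, ih]
    push_cast
    ring

lemma vP_prod {ι : Type*} (s : Finset ι) {f : ι → Poly K} (hf : ∀ k ∈ s, f k ≠ 0) :
    vP ν (∏ k ∈ s, f k) = ∑ k ∈ s, vP ν (f k) := by
  classical
  induction s using Finset.induction_on with
  | empty => simp [vP_one]
  | insert a s ha ih =>
    have hs : ∀ k ∈ s, f k ≠ 0 := fun k hk => hf k (mem_insert_of_mem hk)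
    rw [prod_insert ha, sum_insert ha, vP_mul ν (hf a (mem_insert_self a s))
      (prod_ne_zero_iff.2 hs), ih hs]

lemma vP_div_eq {z : RF K} (hz : z ≠ 0) :
    ∃ f g : Poly K, f ≠ 0 ∧ g ≠ 0 ∧ ν.v z = vP ν f - vP ν g := by
  obtain ⟨f, g, hg, rfl⟩ := IsFractionRing.div_surjective (A := Poly K) z
  have hg0 : g ≠ 0 := nonZeroDivisors.ne_zero hg
  have hf0 : f ≠ 0 := by rintro rfl; simp at hz
  refine ⟨f, g, hf0, hg0, ?_⟩
  have h := ν.v_mul _ _ hz (algebraMap_poly_ne_zero hg0)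
  rw [div_mul_cancel₀ _ (algebraMap_poly_ne_zero hg0)] at h
  rw [vP, vP, h]
  ring

variable {ν}

lemma vP_C (hdom : DominatesRm ν) {a : K} (ha : a ≠ 0) : vP ν (C a) = 0 := by
  have hC : (C a : Poly K) ≠ 0 := by simpa using ha
  have hC' : (C a⁻¹ : Poly K) ≠ 0 := by simpa using ha
  have h := vP_mul ν hC hC'
  rw [← map_mul, mul_inv_cancel₀ ha, map_one, vP_one] at h
  linarith [hdom.1 _ hC, hdom.1 _ hC']

lemma vP_eq_zero_of_constantCoeff_ne_zero (hdom : DominatesRm ν) {g : Poly K}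
    (hg : constantCoeff g ≠ 0) : vP ν g = 0 := by
  set c := constantCoeff g
  have hg0 : g ≠ 0 := by rintro rfl; simp [c] at hg
  by_cases hh : C c - g = 0
  · rw [← sub_eq_zero.1 hh]
    exact vP_C hdom hg
  -- `C c = g + (C c - g)` with `ν(C c) = 0` and `ν(C c - g) > 0`, so `ν(g) ≤ 0`
  have hpos : 0 < vP ν (C c - g) := hdom.2 _ hh (by simp [c])
  have hmin := ν.v_add _ _ (algebraMap_poly_ne_zero hg0) (algebraMap_poly_ne_zero hh)
    (by rw [← map_add, add_sub_cancel]; exact algebraMap_poly_ne_zero (by simpa using hg))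
  rw [← map_add, add_sub_cancel] at hmin
  change min (vP ν g) (vP ν (C c - g)) ≤ vP ν (C c) at hmin
  rw [vP_C hdom hg] at hmin
  rcases min_le_iff.1 hmin with h | h <;> linarith [hdom.1 g hg0]

lemma Nondiscrete.exists_vP_notMem_zmultiples (hnd : Nondiscrete ν) (g : ℚ) :
    ∃ f : Poly K, f ≠ 0 ∧ vP ν f ∉ AddSubgroup.zmultiples g := by
  by_contra! h
  refine hnd ⟨g, fun z hz => ?_⟩
  obtain ⟨f, f', hf, hf', hz⟩ := vP_div_eq ν hz
  obtain ⟨k, hk⟩ := AddSubgroup.mem_zmultiples_iff.1 (sub_mem (h f hf) (h f' hf'))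
  exact ⟨k, by rw [hz, ← hk, zsmul_eq_mul]⟩

end Valuation

section Monomials

variable (ν : RatVal (RF K)) (G : GSData K)

lemma evalγ_add (e e' : ℕ →₀ ℕ) : evalγ ν G (e + e') = evalγ ν G e + evalγ ν G e' :=
  Finsupp.sum_add_index' (by simp) fun _ _ _ => by push_cast; ring

lemma evalγ_single (k c : ℕ) : evalγ ν G (Finsupp.single k c) = c * G.γ ν k :=
  Finsupp.sum_single_index (by simp)

lemma Pmon_single (k c : ℕ) : Pmon G (Finsupp.single k c) = G.Q k ^ c :=
  Finsupp.prod_single_index (pow_zero _)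

lemma evalγ_eq_sum_range (e : ℕ →₀ ℕ) {L : ℕ} (he : e.support ⊆ range L) :
    evalγ ν G e = ∑ k ∈ range L, (e k : ℚ) * G.γ ν k :=
  Finsupp.sum_of_support_subset e he _ fun _ _ => by simp

lemma GSData.d_dvd_d {l l' : ℕ} (h : l ≤ l') : G.d l ∣ G.d l' :=
  prod_dvd_prod_of_subset _ _ _ (Icc_subset_Icc_right (by omega))

end Monomials

namespace IsGenSeq

variable {ν : RatVal (RF K)} {G : GSData K}

lemma d_pos (hG : IsGenSeq ν G) (l : ℕ) : 0 < G.d l :=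
  prod_pos fun k hk => hG.hmbar_pos k (mem_Icc.1 hk).1

lemma coeff_Q_lead (hG : IsGenSeq ν G) {l : ℕ} (hl : 1 ≤ l) :
    coeff (Finsupp.single 1 (G.d l)) (G.Q l) = 1 := by
  have hY : coeff (Finsupp.single 1 (G.d l)) ((X 1 : Poly K) ^ G.d l) = 1 := by
    simp [coeff_X_pow]
  rcases hG.hmonic l hl with h | h
  · rw [sub_eq_zero.1 h, hY]
  · have h0 : coeff (Finsupp.single 1 (G.d l)) (G.Q l - X 1 ^ G.d l) = 0 :=
      notMem_support_iff.1 fun hmem => by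
        simpa using (degreeOf_lt_iff (hG.d_pos l)).1 h _ hmem
    rwa [coeff_sub, hY, sub_eq_zero] at h0

lemma Q_ne_zero (hG : IsGenSeq ν G) (l : ℕ) : G.Q l ≠ 0 := by
  rcases Nat.eq_zero_or_pos l with rfl | hl
  · rw [hG.hQ0]
    exact X_ne_zero 0
  · intro h
    simpa [h] using hG.coeff_Q_lead hl

lemma Pmon_ne_zero (hG : IsGenSeq ν G) (e : ℕ →₀ ℕ) : Pmon G e ≠ 0 :=
  prod_ne_zero_iff.2 fun k _ => pow_ne_zero _ (hG.Q_ne_zero k)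

lemma vP_Pmon (hG : IsGenSeq ν G) (e : ℕ →₀ ℕ) : vP ν (Pmon G e) = evalγ ν G e := by
  rw [Pmon, Finsupp.prod, vP_prod ν _ fun k _ => pow_ne_zero _ (hG.Q_ne_zero k)]
  exact sum_congr rfl fun k _ => vP_pow ν (hG.Q_ne_zero k) _

lemma exists_vP_eq_evalγ (hG : IsGenSeq ν G) {f : Poly K} (hf : f ≠ 0) :
    ∃ e, vP ν f = evalγ ν G e := by
  obtain ⟨c, ⟨hadm, hsum⟩, -⟩ := hG.hexpand f hf
  obtain ⟨-, e, -, he, -⟩ := hG.hval f hf c hadm hsum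
  exact ⟨e, he⟩

lemma mem_SRm_iff (hG : IsGenSeq ν G) (hdom : DominatesRm ν) {q : ℚ} :
    q ∈ SRm ν ↔ ∃ e, q = evalγ ν G e := by
  constructor
  · rintro ⟨f, g, hf, hg, rfl⟩
    obtain ⟨e, he⟩ := hG.exists_vP_eq_evalγ hf
    exact ⟨e, by rw [vP_eq_zero_of_constantCoeff_ne_zero hdom hg, he, sub_zero]⟩
  · rintro ⟨e, rfl⟩
    exact ⟨Pmon G e, 1, hG.Pmon_ne_zero e, by simp, by rw [vP_one, hG.vP_Pmon, sub_zero]⟩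

lemma γ_pos (hG : IsGenSeq ν G) (hdom : DominatesRm ν) (l : ℕ) : 0 < G.γ ν l := by
  induction l with
  | zero => exact hdom.2 _ (hG.Q_ne_zero 0) (by simp [hG.hQ0])
  | succ l ih =>
    rcases Nat.eq_zero_or_pos l with rfl | hl
    · exact hdom.2 _ (hG.Q_ne_zero 1) (by simp [hG.hQ1])
    · have hm : (1 : ℚ) ≤ G.mbar l := by exact_mod_cast hG.hmbar_pos l hl
      nlinarith [hG.hgrowth l hl]

lemma strictMonoOn_γ (hG : IsGenSeq ν G) (hdom : DominatesRm ν) :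
    StrictMonoOn (G.γ ν) (Set.Ici 1) := by
  refine strictMonoOn_Ici_of_pred_lt fun l hl => ?_
  obtain ⟨k, rfl⟩ : ∃ k, l = k + 1 := ⟨l - 1, by omega⟩
  have hm : (1 : ℚ) ≤ G.mbar k := by exact_mod_cast hG.hmbar_pos k (by omega)
  rw [Order.pred_eq_sub_one, Nat.add_sub_cancel]
  nlinarith [hG.hgrowth k (by omega), hG.γ_pos hdom k]

lemma mul_γ_le_evalγ (hG : IsGenSeq ν G) (hdom : DominatesRm ν) (e : ℕ →₀ ℕ) (k : ℕ) :
    e k * G.γ ν k ≤ evalγ ν G e := by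
  by_cases hk : k ∈ e.support
  · exact single_le_sum (f := fun k => (e k : ℚ) * G.γ ν k)
      (fun k _ => mul_nonneg (Nat.cast_nonneg _) (hG.γ_pos hdom k).le) hk
  · rw [Finsupp.notMem_support_iff.1 hk, Nat.cast_zero, zero_mul]
    exact sum_nonneg fun k _ => mul_nonneg (Nat.cast_nonneg _) (hG.γ_pos hdom k).le

lemma evalγ_pos (hG : IsGenSeq ν G) (hdom : DominatesRm ν) {e : ℕ →₀ ℕ} (he : e ≠ 0) :
    0 < evalγ ν G e := by
  obtain ⟨k, hk⟩ := Finsupp.ne_iff.1 he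
  have h1 : (1 : ℚ) ≤ e k := by exact_mod_cast Nat.one_le_iff_ne_zero.2 hk
  nlinarith [hG.mul_γ_le_evalγ hdom e k, hG.γ_pos hdom k]

lemma eq_single_of_evalγ_eq_γ (hG : IsGenSeq ν G) (hdom : DominatesRm ν) {L : ℕ}
    (hL : 1 ≤ L) (hmbar : 2 ≤ G.mbar L) {e : ℕ →₀ ℕ} (he : evalγ ν G e = G.γ ν L) :
    e = Finsupp.single L 1 := by
  have hγL := hG.γ_pos hdom L
  have habove : ∀ k, L < k → e k = 0 := by
    intro k hk
    by_contra h0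
    have h1 : (1 : ℚ) ≤ e k := by exact_mod_cast Nat.one_le_iff_ne_zero.2 h0
    have hγk := hG.strictMonoOn_γ hdom (Set.mem_Ici.2 hL) (Set.mem_Ici.2 (by omega)) hk
    nlinarith [hG.mul_γ_le_evalγ hdom e k]
  have hsplit : G.γ ν L = e L * G.γ ν L + evalγ ν G (e.erase L) := by
    rw [← evalγ_single, ← evalγ_add, Finsupp.single_add_erase, he]
  rcases Nat.lt_or_ge (e L) 1 with h0 | h1
  · -- then `γ_L ∈ G(γ_0, …, γ_{L-1})`, against the minimality of `m̄_L ≥ 2`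
    have hsupp : e.support ⊆ range L := fun k hk => mem_range.2 <| by
      by_contra hkL
      rcases (not_lt.1 hkL).lt_or_eq with hLk | rfl
      · exact Finsupp.mem_support_iff.1 hk (habove k hLk)
      · exact Finsupp.mem_support_iff.1 hk (by omega)
    have := hG.hmbar_min L hL 1 one_pos
      ⟨fun k => e k, by rw [Nat.cast_one, one_mul, ← he, evalγ_eq_sum_range ν G e hsupp]; simp⟩
    omega
  · have hle : e L ≤ 1 := by
      by_contra h2
      have : (2 : ℚ) ≤ e L := by exact_mod_cast not_le.1 h2
      nlinarith [hG.mul_γ_le_evalγ hdom e L]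
    have hrest : e.erase L = 0 := by
      by_contra hne
      have := hG.evalγ_pos hdom hne
      have : (1 : ℚ) ≤ e L := by exact_mod_cast h1
      nlinarith
    rw [← Finsupp.single_add_erase L e, hrest, add_zero, le_antisymm hle h1]

lemma infinite_setOf_two_le_mbar (hG : IsGenSeq ν G) (hnd : Nondiscrete ν) :
    {L | 2 ≤ G.mbar L}.Infinite := by
  refine Set.infinite_of_forall_exists_gt fun N => ?_
  by_contra! hN
  obtain ⟨g, hg⟩ := Rat.exists_forall_mem_zmultiples ((range (N + 1)).image (G.γ ν))
  -- past `N` all `m̄_l` are `1`, so every `γ_l` lies in the group generated by `γ_0, …, γ_N`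
  have hγ : ∀ l, G.γ ν l ∈ AddSubgroup.zmultiples g := by
    intro l
    induction l using Nat.strong_induction_on with
    | _ l ih =>
      by_cases hl : l ≤ N
      · exact hg _ (mem_image_of_mem _ (mem_range.2 (by omega)))
      have hmbar : G.mbar l = 1 := by
        have := hG.hmbar_pos l (by omega)
        have := mt (hN l) hl
        simp only [Set.mem_ofPred_eq, not_le] at this
        omega
      obtain ⟨c, hc⟩ := hG.hmbar_mem l (by omega)
      rw [hmbar, Nat.cast_one, one_mul] at hc
      rw [hc]
      refine AddSubgroup.sum_mem _ fun k hk => ?_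
      rw [← zsmul_eq_mul]
      exact AddSubgroup.zsmul_mem _ (ih k (mem_range.1 hk)) _
  obtain ⟨f, hf, hfg⟩ := hnd.exists_vP_notMem_zmultiples g
  obtain ⟨e, he⟩ := hG.exists_vP_eq_evalγ hf
  refine hfg (he ▸ AddSubgroup.sum_mem _ fun k _ => ?_)
  simp only [← nsmul_eq_mul]
  exact AddSubgroup.nsmul_mem _ (hγ k) _

end IsGenSeq

section Action

lemma act_C (u v a : K) : act u v (C a) = C a :=
  (act u v).commutes a

lemma act_monomial (u v : K) (σ : Fin 2 →₀ ℕ) (a : K) :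
    act u v (monomial σ a) = monomial σ (u ^ σ 0 * v ^ σ 1 * a) := by
  simp only [monomial_eq, Finsupp.prod_fintype _ _ fun _ => pow_zero _, Fin.prod_univ_two,
    act, map_mul, map_pow, aeval_X, aeval_C, algebraMap_eq, Matrix.cons_val_zero,
    Matrix.cons_val_one, mul_pow]
  ring

lemma coeff_act (u v : K) (f : Poly K) (σ : Fin 2 →₀ ℕ) :
    coeff σ (act u v f) = u ^ σ 0 * v ^ σ 1 * coeff σ f := by
  induction f using MvPolynomial.induction_on' with
  | monomial σ' a =>
    rw [act_monomial, coeff_monomial, coeff_monomial]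
    split_ifs with h
    · rw [h]
    · rw [mul_zero]
  | add f g hf hg => rw [map_add, coeff_add, coeff_add, hf, hg, mul_add]

end Action

section Group

variable {α β : K} {i j t x m n : ℕ} {p : K × K}

lemma Hmem.fst_pow_eq_one (hp : Hmem α β i j t x p) (hα : α ^ m = 1) (him : i ∣ m) :
    p.1 ^ (m / i) = 1 := by
  obtain ⟨a, b, -, rfl⟩ := hp
  rw [← zpow_natCast, ← zpow_mul, mul_assoc, ← Nat.cast_mul, Nat.mul_div_cancel' him, mul_comm,
    zpow_mul, zpow_natCast, hα, one_zpow]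

lemma Hmem.snd_pow_eq_one (hp : Hmem α β i j t x p) (hβ : β ^ n = 1) (hjn : j ∣ n) :
    p.2 ^ (n / j) = 1 := by
  obtain ⟨a, b, -, rfl⟩ := hp
  rw [← zpow_natCast, ← zpow_mul, mul_assoc, ← Nat.cast_mul, Nat.mul_div_cancel' hjn, mul_comm,
    zpow_mul, zpow_natCast, hβ, one_zpow]

lemma exists_Hmem_snd_eq (hxt : Nat.gcd x t = 1) : ∃ u : K, Hmem α β i j t x (u, β ^ j) := by
  obtain ⟨a, w, haw⟩ : IsCoprime (x : ℤ) t := Int.isCoprime_iff_gcd_eq_one.2 hxt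
  refine ⟨α ^ (a * (i : ℤ)), a, 1, Int.modEq_iff_dvd.2 ⟨-w, by linear_combination haw⟩, ?_⟩
  rw [one_mul, zpow_natCast]

end Group

/-- The eigenvalue of `Q_l` under `p`, as read off the leading term `Y ^ d(l)` (see `act_Q`). -/
def GSData.eigQ (G : GSData K) (p : K × K) (l : ℕ) : K := if l = 0 then p.1 else p.2 ^ G.d l

def GSData.eigPmon (G : GSData K) (p : K × K) (e : ℕ →₀ ℕ) : K :=
  e.prod fun k a => G.eigQ p k ^ a

namespace IsGenSeq

variable {ν : RatVal (RF K)} {G : GSData K} {α β : K} {i j t x m n : ℕ}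

lemma act_Q (hG : IsGenSeq ν G) {p : K × K} {l : ℕ}
    (hQ : ∃ lam : K, act p.1 p.2 (G.Q l) = lam • G.Q l) :
    act p.1 p.2 (G.Q l) = C (G.eigQ p l) * G.Q l := by
  rcases Nat.eq_zero_or_pos l with rfl | hl
  · simp [GSData.eigQ, hG.hQ0, act]
  obtain ⟨lam, hlam⟩ := hQ
  have hcoeff := congrArg (coeff (Finsupp.single 1 (G.d l))) hlam
  rw [coeff_act, coeff_smul, hG.coeff_Q_lead hl] at hcoeff
  rw [Finsupp.single_eq_same, Finsupp.single_eq_of_ne (by decide), pow_zero, one_mul,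
    mul_one, smul_eq_mul, mul_one] at hcoeff
  rw [hlam, smul_eq_C_mul, GSData.eigQ, if_neg hl.ne', hcoeff]

lemma act_Pmon (hG : IsGenSeq ν G) {p : K × K}
    (hQ : ∀ l, ∃ lam : K, act p.1 p.2 (G.Q l) = lam • G.Q l) (e : ℕ →₀ ℕ) :
    act p.1 p.2 (Pmon G e) = C (G.eigPmon p e) * Pmon G e := by
  simp only [Pmon, GSData.eigPmon, map_finsuppProd, map_pow, hG.act_Q (hQ _), mul_pow,
    Finsupp.prod_mul]

lemma invariant_Pmon_iff (hG : IsGenSeq ν G) (heig : ∀ l, IsEigen α β i j t x (G.Q l))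
    (e : ℕ →₀ ℕ) :
    Invariant α β i j t x (Pmon G e) ↔ ∀ p, Hmem α β i j t x p → G.eigPmon p e = 1 := by
  refine forall₂_congr fun p hp => ?_
  rw [hG.act_Pmon (fun l => heig l p hp)]
  conv_lhs => rhs; rw [← one_mul (Pmon G e), ← C_1]
  rw [mul_left_inj' (hG.Pmon_ne_zero e), C_inj]

lemma mem_SA_iff (hG : IsGenSeq ν G) (hdom : DominatesRm ν)
    (heig : ∀ l, IsEigen α β i j t x (G.Q l)) {q : ℚ} :
    q ∈ SA ν α β i j t x ↔ ∃ e, Invariant α β i j t x (Pmon G e) ∧ q = evalγ ν G e := by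
  constructor
  · rintro ⟨f, g, hf, hfinv, -, hg, rfl⟩
    obtain ⟨c, ⟨hadm, hsum⟩, huniq⟩ := hG.hexpand f hf
    obtain ⟨-, e, he, hval, -⟩ := hG.hval f hf c hadm hsum
    refine ⟨e, (hG.invariant_Pmon_iff heig e).2 fun p hp => ?_,
      by rw [vP_eq_zero_of_constantCoeff_ne_zero hdom hg, hval, sub_zero]⟩
    -- `p` multiplies each coefficient of the expansion of `f` by the eigenvalue of its monomial,
    -- and the expansion of `f = p • f` is unique
    set c' : (ℕ →₀ ℕ) →₀ K := (fun e => G.eigPmon p e) • c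
    have hsupp : c'.support ⊆ c.support := fun e' he' =>
      Finsupp.mem_support_iff.2 (right_ne_zero_of_mul (Finsupp.mem_support_iff.1 he'))
    have hexp : f = c'.sum fun e a => C a * Pmon G e := by
      conv_lhs => rw [← hfinv p hp, hsum]
      rw [Finsupp.sum_of_support_subset c' hsupp _ fun _ _ => by rw [C_0, zero_mul],
        Finsupp.sum, map_sum]
      refine sum_congr rfl fun e' _ => ?_
      rw [map_mul, act_C, hG.act_Pmon (fun l => heig l p hp)]
      simp only [c', Finsupp.coe_pointwise_smul, smul_eq_mul, Pi.mul_apply, C_mul]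
      ring
    have hc' : c' e = c e :=
      DFunLike.congr_fun (huniq c' ⟨fun e' he' => hadm e' (hsupp he'), hexp⟩) e
    exact (mul_eq_right₀ (Finsupp.mem_support_iff.1 he)).1 hc'
  · rintro ⟨e, hinv, rfl⟩
    exact ⟨Pmon G e, 1, hG.Pmon_ne_zero e, hinv, fun _ _ => map_one _, by simp,
      by rw [vP_one, hG.vP_Pmon, sub_zero]⟩

lemma invariant_Pmon_of_dvd (hG : IsGenSeq ν G) (heig : ∀ l, IsEigen α β i j t x (G.Q l))
    (hα : α ^ m = 1) (hβ : β ^ n = 1) (him : i ∣ m) (hjn : j ∣ n) {e : ℕ →₀ ℕ}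
    (hX : m / i ∣ e 0) (hQ : ∀ k, 1 ≤ k → n / j ∣ e k * G.d k) :
    Invariant α β i j t x (Pmon G e) := by
  refine (hG.invariant_Pmon_iff heig e).2 fun p hp => prod_eq_one fun k _ => ?_
  change G.eigQ p k ^ e k = 1
  rcases Nat.eq_zero_or_pos k with rfl | hk
  · obtain ⟨s, hs⟩ := hX
    rw [GSData.eigQ, if_pos rfl, hs, pow_mul, hp.fst_pow_eq_one hα him, one_pow]
  · obtain ⟨s, hs⟩ := hQ k hk
    rw [GSData.eigQ, if_neg hk.ne', ← pow_mul, mul_comm, hs, pow_mul, hp.snd_pow_eq_one hβ hjn,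
      one_pow]

lemma dvd_d_of_invariant_Q (hG : IsGenSeq ν G) (heig : ∀ l, IsEigen α β i j t x (G.Q l))
    (hβ : IsPrimitiveRoot β n) (hj : 0 < j) (hjn : j ∣ n) (hxt : Nat.gcd x t = 1) {L : ℕ}
    (hL : 1 ≤ L) (hinv : Invariant α β i j t x (G.Q L)) : n / j ∣ G.d L := by
  obtain ⟨u, hp⟩ := exists_Hmem_snd_eq (α := α) (β := β) (i := i) hxt
  have h := (hG.invariant_Pmon_iff heig (Finsupp.single L 1)).1
    (by rwa [Pmon_single, pow_one]) _ hp
  rw [GSData.eigPmon, Finsupp.prod_single_index (by rw [pow_zero]), pow_one, GSData.eigQ,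
    if_neg (by omega), ← pow_mul] at h
  have hdvd := (hβ.pow_eq_one_iff_dvd _).1 h
  rw [← Nat.mul_div_cancel' hjn] at hdvd
  exact Nat.dvd_of_mul_dvd_mul_left hj hdvd

theorem fGover_of_dvd_d (hG : IsGenSeq ν G) (hdom : DominatesRm ν)
    (heig : ∀ l, IsEigen α β i j t x (G.Q l)) (hα : α ^ m = 1) (hβ : β ^ n = 1) (him : i ∣ m)
    (hjn : j ∣ n) (hmi : 0 < m / i) (hnj : 0 < n / j) {l₀ : ℕ} (hl₀ : 0 < l₀)
    (hdvd : n / j ∣ G.d l₀) : FGover (SRm ν) (SA ν α β i j t x) := by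
  classical
  let M : ℕ → ℕ := fun k => if k = 0 then m / i else if k < l₀ then n / j else 1
  have hM : ∀ k, 0 < M k := fun k => by
    simp only [M]
    split_ifs <;> omega
  refine ⟨((range l₀).finsupp fun k => range (M k)).image (evalγ ν G), ?_, ?_⟩
  · intro q hq
    obtain ⟨r, -, rfl⟩ := mem_image.1 hq
    exact (hG.mem_SRm_iff hdom).2 ⟨r, rfl⟩
  ext q
  refine ⟨fun hq => ?_, fun ⟨_, hqF, τ, hτ, hsum⟩ => ?_⟩
  · obtain ⟨e, rfl⟩ := (hG.mem_SRm_iff hdom).1 hq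
    obtain ⟨r, e', rfl, hr, he'⟩ := Finsupp.exists_eq_add_of_lt_of_dvd M hM e
    have hrsupp : r.support ⊆ range l₀ := fun k hk => mem_range.2 <| by
      by_contra hkl
      have := hr k
      simp only [M, if_neg hkl, show k ≠ 0 by omega, if_false] at this
      exact Finsupp.mem_support_iff.1 hk (by omega)
    refine ⟨evalγ ν G r, mem_image_of_mem _ (mem_finsupp_iff.2 ⟨hrsupp, fun k _ =>
      mem_range.2 (hr k)⟩), evalγ ν G e', (hG.mem_SA_iff hdom heig).2 ⟨e', ?_, rfl⟩,
      (evalγ_add ν G r e').symm⟩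
    refine hG.invariant_Pmon_of_dvd heig hα hβ him hjn (by simpa [M] using he' 0) fun k hk => ?_
    by_cases hkl : k < l₀
    · exact (by simpa [M, show k ≠ 0 by omega, hkl] using he' k : n / j ∣ e' k).mul_right _
    · exact (hdvd.trans (G.d_dvd_d (by omega))).mul_left _
  · obtain ⟨r, -, rfl⟩ := mem_image.1 hqF
    obtain ⟨e, -, rfl⟩ := (hG.mem_SA_iff hdom heig).1 hτ
    exact (hG.mem_SRm_iff hdom).2 ⟨r + e, by rw [← hsum, evalγ_add]⟩

theorem not_fGover (hG : IsGenSeq ν G) (hdom : DominatesRm ν) (hnd : Nondiscrete ν)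
    (heig : ∀ l, IsEigen α β i j t x (G.Q l)) (hβ : IsPrimitiveRoot β n) (hj : 0 < j)
    (hjn : j ∣ n) (hxt : Nat.gcd x t = 1) (hndvd : ∀ l, 2 ≤ l → ¬ n / j ∣ G.d l) :
    ¬ FGover (SRm ν) (SA ν α β i j t x) := by
  rintro ⟨F, hFS, hFG⟩
  -- `Q_L` is the only monomial of value `γ_L`, and it is not invariant
  have hmem : ∀ L, 2 ≤ L → 2 ≤ G.mbar L → G.γ ν L ∈ (F : Set ℚ) := by
    intro L hL hmbar
    have hγ : G.γ ν L ∈ SRm ν :=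
      (hG.mem_SRm_iff hdom).2 ⟨Finsupp.single L 1, by rw [evalγ_single, Nat.cast_one, one_mul]⟩
    rw [hFG] at hγ
    obtain ⟨q, hq, τ, hτ, hsum⟩ := hγ
    obtain ⟨e, rfl⟩ := (hG.mem_SRm_iff hdom).1 (hFS hq)
    obtain ⟨e', hinv, rfl⟩ := (hG.mem_SA_iff hdom heig).1 hτ
    replace hsum : evalγ ν G (e + e') = G.γ ν L := by rw [evalγ_add]; exact hsum
    rcases Finsupp.add_eq_single_one (hG.eq_single_of_evalγ_eq_γ hdom (by omega) hmbar hsum)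
      with ⟨rfl, -⟩ | ⟨-, rfl⟩
    · rwa [evalγ_single, Nat.cast_one, one_mul] at hq
    · rw [Pmon_single, pow_one] at hinv
      exact absurd (hG.dvd_d_of_invariant_Q heig hβ hj hjn hxt (by omega) hinv) (hndvd L hL)
  have hinf := (hG.infinite_setOf_two_le_mbar hnd).sdiff (Set.finite_Iio 2)
  refine F.finite_toSet.not_infinite ((hinf.image ((hG.strictMonoOn_γ hdom).injOn.mono ?_)).mono ?_)
  · rintro L ⟨-, hL⟩
    simp only [Set.mem_Iio, not_lt] at hL
    exact Set.mem_Ici.2 (by omega)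
  · rintro _ ⟨L, ⟨hmbar, hL⟩, rfl⟩
    simp only [Set.mem_Iio, not_lt] at hL
    exact hmem L hL hmbar

end IsGenSeq

theorem stmt_8_general (K : Type) [Field K]
    (m n : ℕ) (hm : 0 < m) (hn : 0 < n) (α β : K)
    (hα : IsPrimitiveRoot α m) (hβ : IsPrimitiveRoot β n)
    (i j t x : ℕ) (hi : 0 < i) (hj : 0 < j)
    (him : i ∣ m) (hjn : j ∣ n)
    (hxt : Nat.gcd x t = 1)
    (ν : RatVal (RF K)) (hdom : DominatesRm ν) (hnd : Nondiscrete ν)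
    (G : GSData K) (hG : IsGenSeq ν G)
    (heig : ∀ l, IsEigen α β i j t x (G.Q l)) :
    ¬ FGover (SRm ν) (SA ν α β i j t x) ↔
      (j ≠ n ∧ ∀ l, 2 ≤ l → ¬ (n / j) ∣ G.d l) := by
  have hfg : ∀ l, 0 < l → n / j ∣ G.d l → FGover (SRm ν) (SA ν α β i j t x) :=
    fun l hl => hG.fGover_of_dvd_d hdom heig hα.pow_eq_one hβ.pow_eq_one him hjn
      (Nat.div_pos (Nat.le_of_dvd hm him) hi) (Nat.div_pos (Nat.le_of_dvd hn hjn) hj) hl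
  refine ⟨fun hnfg => ⟨fun hjeq => hnfg (hfg 1 one_pos ?_),
    fun l hl hdvd => hnfg (hfg l (by omega) hdvd)⟩,
    fun ⟨_, hndvd⟩ => hG.not_fGover hdom hnd heig hβ hj hjn hxt hndvd⟩
  rw [hjeq, Nat.div_self hn]
  exact one_dvd _

/-- non-finite generation iff `j ≠ n` and `(n/j) ∤ d(l)` for all `l ≥ 2`. -/
theorem stmt_8 (K : Type) [Field K] [IsAlgClosed K] [CharZero K]
    (m n : ℕ) (hm : 0 < m) (hn : 0 < n) (α β : K)
    (hα : IsPrimitiveRoot α m) (hβ : IsPrimitiveRoot β n)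
    (i j t x : ℕ) (hi : 0 < i) (hj : 0 < j) (ht : 0 < t)
    (him : i ∣ m) (hjn : j ∣ n) (hti : t ∣ m / i) (htj : t ∣ n / j)
    (hxt : Nat.gcd x t = 1) (hx1 : 1 ≤ x) (hxle : x ≤ t)
    (ν : RatVal (RF K)) (hdom : DominatesRm ν) (hnd : Nondiscrete ν)
    (G : GSData K) (hG : IsGenSeq ν G)
    (heig : ∀ l, IsEigen α β i j t x (G.Q l)) :
    ¬ FGover (SRm ν) (SA ν α β i j t x) ↔
      (j ≠ n ∧ ∀ l, 2 ≤ l → ¬ (n / j) ∣ G.d l) :=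
  stmt_8_general K m n hm hn α β hα hβ i j t x hi hj him hjn hxt ν hdom hnd G hG heig

end DuttaPaper
end
end

section
/- Suppose gcd(m/i, n/j) > t ≥ 1. If ν is a rational rank 1 non-discrete valuation dominating R_𝔪 with a generating sequence Q_0 = X, Q_1 = Y, Q_2, …, then the sequence {Q_l}_{l ≥ 0} is not a sequence of eigenfunctions for H_{i,j,t,x}; in fact Q_2 is not an eigenfunction for H_{i,j,t,x}. -/
open MvPolynomial Finset Pointwise

noncomputable section

namespace DuttaPaper

variable {K : Type} [Field K]

/-!
By property (4) of a generating sequence, `Q₂ = Y^s - λ X^r` with `λ ≠ 0`, `s = m̄₁` and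
`s γ₁ = r γ₀`; minimality of `m̄₁` forces `gcd(r, s) = 1`. If a binomial `Y^s - λ X^r` is an
eigenfunction of `(u, v)`, comparing the coefficients of its two monomials gives `u^r = v^s`.
Applied to the elements `(1, β^{tj})` and `(α^{ti}, 1)` of `H_{i,j,t,x}`, this yields
`n/j ∣ ts` and `m/i ∣ tr`, so `gcd(m/i, n/j)` divides `t · gcd(r, s) = t`, contradicting
`gcd(m/i, n/j) > t`.
-/

theorem _root_.IsPrimitiveRoot.div_dvd_of_pow_mul_eq_one {M : Type*} [CommMonoid M] {ζ : M}
    {m i k : ℕ} (hζ : IsPrimitiveRoot ζ m) (hi : 0 < i) (him : i ∣ m) (h : ζ ^ (i * k) = 1) :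
    m / i ∣ k :=
  (Nat.div_dvd_iff_dvd_mul him hi).mpr (hζ.pow_eq_one_iff_dvd _ |>.mp h)

lemma act_X_pow_sub_C_mul_X_pow (u v lam : K) (r s : ℕ) :
    act u v (X 1 ^ s - C lam * X 0 ^ r) = C (v ^ s) * X 1 ^ s - C (lam * u ^ r) * X 0 ^ r := by
  simp only [act, map_sub, map_pow, map_mul, aeval_X, aeval_C, Matrix.cons_val_zero,
    Matrix.cons_val_one, algebraMap_eq, mul_pow]
  ring

lemma pow_eq_pow_of_act_eq_smul {u v lam c : K} {r s : ℕ} (hrs : r ≠ 0 ∨ s ≠ 0) (hlam : lam ≠ 0)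
    (h : act u v (X 1 ^ s - C lam * X 0 ^ r) = c • (X 1 ^ s - C lam * X 0 ^ r)) :
    u ^ r = v ^ s := by
  have hne : Finsupp.single (0 : Fin 2) r ≠ Finsupp.single 1 s := by
    simp only [ne_eq, Finsupp.single_eq_single_iff]
    omega
  rw [act_X_pow_sub_C_mul_X_pow, smul_sub, smul_eq_C_mul, smul_eq_C_mul, ← mul_assoc,
    ← C_mul] at h
  have hY := congrArg (coeff (Finsupp.single 1 s)) h
  have hX := congrArg (coeff (Finsupp.single 0 r)) h
  simp only [coeff_sub, coeff_C_mul, coeff_X_pow, if_pos, if_neg hne, if_neg hne.symm] at hY hX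
  calc u ^ r = c := mul_left_cancel₀ hlam (by linear_combination -hX)
    _ = v ^ s := by linear_combination -hY

lemma hmem_one_pow (α β : K) (i j t x : ℕ) : Hmem α β i j t x (1, β ^ (t * j)) :=
  ⟨0, t, by simp, by simp [← zpow_natCast]⟩

lemma hmem_pow_one (α β : K) (i j t x : ℕ) : Hmem α β i j t x (α ^ (t * i), 1) :=
  ⟨t, 0, (Int.modEq_zero_iff_dvd.mpr (dvd_mul_right _ _)).symm, by simp [← zpow_natCast]⟩

lemma not_isEigen_X_pow_sub_C_mul_X_pow {m n i j t x r s : ℕ} {α β lam : K}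
    (hα : IsPrimitiveRoot α m) (hβ : IsPrimitiveRoot β n) (hi : 0 < i) (hj : 0 < j) (ht : 0 < t)
    (him : i ∣ m) (hjn : j ∣ n) (hgt : t < Nat.gcd (m / i) (n / j)) (hrs : r.Coprime s)
    (hlam : lam ≠ 0) :
    ¬ IsEigen α β i j t x (X 1 ^ s - C lam * X 0 ^ r) := by
  intro heig
  have hrs₀ : r ≠ 0 ∨ s ≠ 0 := by
    by_contra! h
    simp [h.1, h.2, Nat.Coprime] at hrs
  have weight {u v : K} (huv : Hmem α β i j t x (u, v)) : u ^ r = v ^ s := by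
    obtain ⟨c, hc⟩ := heig _ huv
    exact pow_eq_pow_of_act_eq_smul hrs₀ hlam hc
  have hm : m / i ∣ t * r := hα.div_dvd_of_pow_mul_eq_one hi him <| by
    rw [← mul_assoc, mul_comm i t, pow_mul, weight (hmem_pow_one α β i j t x), one_pow]
  have hn : n / j ∣ t * s := hβ.div_dvd_of_pow_mul_eq_one hj hjn <| by
    rw [← mul_assoc, mul_comm j t, pow_mul, ← weight (hmem_one_pow α β i j t x), one_pow]
  have hdvd : Nat.gcd (m / i) (n / j) ∣ t := by
    simpa [Nat.gcd_mul_left, hrs] using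
      Nat.dvd_gcd ((Nat.gcd_dvd_left _ _).trans hm) ((Nat.gcd_dvd_right _ _).trans hn)
  exact absurd (Nat.le_of_dvd ht hdvd) (not_le.mpr hgt)

namespace IsGenSeq

variable {ν : RatVal (RF K)} {G : GSData K}

lemma coprime_of_mbar_one_mul_eq (hG : IsGenSeq ν G) {r : ℕ}
    (h : (G.mbar 1 : ℚ) * G.γ ν 1 = r * G.γ ν 0) : r.Coprime (G.mbar 1) := by
  set s := G.mbar 1
  set d := r.gcd s
  have hs : 0 < s := hG.hmbar_pos 1 le_rfl
  have hd : 0 < d := Nat.gcd_pos_of_pos_right r hs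
  obtain ⟨r', hr'⟩ : d ∣ r := Nat.gcd_dvd_left r s
  obtain ⟨s', hs'⟩ : d ∣ s := Nat.gcd_dvd_right r s
  have hs'pos : 0 < s' := Nat.pos_of_mul_pos_left (hs' ▸ hs)
  have hmin : s ≤ s' := hG.hmbar_min 1 le_rfl s' hs'pos ⟨fun _ => r', by
    have hrq : (r : ℚ) = d * r' := by exact_mod_cast hr'
    have hsq : (s : ℚ) = d * s' := by exact_mod_cast hs'
    simp only [Finset.sum_range_one, Int.cast_natCast]
    refine mul_left_cancel₀ (Nat.cast_ne_zero.mpr hd.ne' : (d : ℚ) ≠ 0) ?_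
    linear_combination h - G.γ ν 1 * hsq + G.γ ν 0 * hrq⟩
  have : d * s' ≤ 1 * s' := by omega
  exact le_antisymm (Nat.le_of_mul_le_mul_right this hs'pos) hd

lemma exists_Q_two_eq (hG : IsGenSeq ν G) :
    ∃ lam : K, lam ≠ 0 ∧ ∃ r : ℕ, r.Coprime (G.mbar 1) ∧
      G.Q 2 = X 1 ^ G.mbar 1 - C lam * X 0 ^ r := by
  obtain ⟨lam, hlam, cc, -, hQ2, hγ⟩ := hG.hrec 1 le_rfl
  rw [Finset.sum_range_one] at hγ
  refine ⟨lam, hlam, cc 0, hG.coprime_of_mbar_one_mul_eq hγ, ?_⟩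
  rw [hQ2, hG.hQ1, Finset.prod_range_one, hG.hQ0]

end IsGenSeq

theorem stmt_9_general (K : Type) [Field K]
    (m n : ℕ) (α β : K)
    (hα : IsPrimitiveRoot α m) (hβ : IsPrimitiveRoot β n)
    (i j t x : ℕ) (hi : 0 < i) (hj : 0 < j) (ht : 0 < t)
    (him : i ∣ m) (hjn : j ∣ n)
    (ν : RatVal (RF K))
    (G : GSData K) (hG : IsGenSeq ν G)
    (hgt : t < Nat.gcd (m / i) (n / j)) :
    ¬ IsEigen α β i j t x (G.Q 2) ∧ ¬ (∀ l, IsEigen α β i j t x (G.Q l)) := by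
  obtain ⟨lam, hlam, r, hr, hQ₂⟩ := hG.exists_Q_two_eq
  have hQ₂_not : ¬ IsEigen α β i j t x (G.Q 2) :=
    hQ₂ ▸ not_isEigen_X_pow_sub_C_mul_X_pow hα hβ hi hj ht him hjn hgt hr hlam
  exact ⟨hQ₂_not, fun hall => hQ₂_not (hall 2)⟩

/-- if `gcd(m/i, n/j) > t`, no generating sequence consists of
eigenfunctions; in fact `Q_2` is not an eigenfunction. -/
theorem stmt_9 (K : Type) [Field K] [IsAlgClosed K] [CharZero K]
    (m n : ℕ) (hm : 0 < m) (hn : 0 < n) (α β : K)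
    (hα : IsPrimitiveRoot α m) (hβ : IsPrimitiveRoot β n)
    (i j t x : ℕ) (hi : 0 < i) (hj : 0 < j) (ht : 0 < t)
    (him : i ∣ m) (hjn : j ∣ n) (hti : t ∣ m / i) (htj : t ∣ n / j)
    (hxt : Nat.gcd x t = 1) (hx1 : 1 ≤ x) (hxle : x ≤ t)
    (ν : RatVal (RF K)) (hdom : DominatesRm ν) (hnd : Nondiscrete ν)
    (G : GSData K) (hG : IsGenSeq ν G)
    (hgt : t < Nat.gcd (m / i) (n / j)) :
    ¬ IsEigen α β i j t x (G.Q 2) ∧ ¬ (∀ l, IsEigen α β i j t x (G.Q l)) :=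
  stmt_9_general K m n α β hα hβ i j t x hi hj ht him hjn ν G hG hgt

end DuttaPaper
end
end

section
/- Let (β_l)_{l ≥ 0} be a sequence of positive rational numbers such that, setting n̄_l = min{ q ∈ ℤ_{>0} : q β_l ∈ Σ_{k<l} β_k ℤ } for l ≥ 1, one has n̄_l > 1 for all l ≥ 1 and β_{l+1} > n̄_l β_l for all l ≥ 1. If d ≥ 1 and β_d = l β_0 + j_1 β_1 + ⋯ + j_r β_r with l, j_1, …, j_r ∈ ℕ and j_r ≠ 0, then r = d, j_d = 1, l = 0 and j_k = 0 for all k ≠ d. -/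
/-! Since `n̄_k ≥ 2`, the `β_k` increase strictly from `k = 1` on. Write the right-hand side as
`Σ_{k ≤ r} e_k β_k` with `e_0 = l`. If `r < d`, then `β_d ∈ Σ_{k<d} β_k ℤ`, which forces
`n̄_d = 1`; so `d ≤ r`, and `β_r ≤ e_r β_r ≤ β_d` forces `r = d`. Finally, a sum of nonnegative
terms that equals `β_d` while containing the term `e_d β_d ≥ β_d` has `e_d = 1` and all other
terms zero. -/

open MvPolynomial Finset Pointwise

noncomputable section

namespace DuttaPaper

variable {K : Type} [Field K]

theorem sum_range_add_one_eq_add_sum_Icc {M : Type*} [AddCommMonoid M] (f : ℕ → M) (r : ℕ) :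
    ∑ k ∈ range (r + 1), f k = f 0 + ∑ k ∈ Icc 1 r, f k := by
  rw [Nat.range_succ_eq_Icc_zero, ← Finset.insert_Icc_add_one_left_eq_Icc r.zero_le,
    sum_insert (by simp), zero_add]

theorem eq_zero_of_sum_le_single {ι M : Type*} [AddCommMonoid M] [PartialOrder M]
    [IsOrderedCancelAddMonoid M] {s : Finset ι} {f : ι → M} (hf : ∀ i ∈ s, 0 ≤ f i) {i : ι}
    (hi : i ∈ s) (hsum : ∑ k ∈ s, f k ≤ f i) {j : ι} (hj : j ∈ s) (hji : j ≠ i) : f j = 0 := by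
  by_contra hne
  exact (Finset.single_lt_sum hji hi hj (lt_of_le_of_ne (hf j hj) (Ne.symm hne))
    fun k hk _ => hf k hk).not_ge hsum

section PositiveWeights

variable {ι R : Type*} [Semiring R] [LinearOrder R] [IsStrictOrderedRing R]

theorem le_sum_natCast_mul_of_ne_zero {b : ι → R} (hb : ∀ k, 0 ≤ b k) {s : Finset ι}
    {e : ι → ℕ} {r : ι} (hr : r ∈ s) (her : e r ≠ 0) : b r ≤ ∑ k ∈ s, (e k : R) * b k :=
  (le_mul_of_one_le_left (hb r) (Nat.one_le_cast.mpr (Nat.one_le_iff_ne_zero.mpr her))).trans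
    (single_le_sum (fun k _ => mul_nonneg (Nat.cast_nonneg _) (hb k)) hr)

theorem eq_one_and_eq_zero_of_eq_sum_natCast_mul {b : ι → R} (hb : ∀ k, 0 < b k)
    {s : Finset ι} {e : ι → ℕ} {r : ι} (hr : r ∈ s) (her : e r ≠ 0)
    (h : b r = ∑ k ∈ s, (e k : R) * b k) : e r = 1 ∧ ∀ k ∈ s, k ≠ r → e k = 0 := by
  have hterm : ∀ k ∈ s, 0 ≤ (e k : R) * b k := fun k _ => mul_nonneg (Nat.cast_nonneg _) (hb k).le
  have her1 : 1 ≤ e r := Nat.one_le_iff_ne_zero.mpr her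
  have hle_one : (e r : R) ≤ 1 :=
    (mul_le_iff_le_one_left (hb r)).mp (h ▸ single_le_sum hterm hr)
  refine ⟨le_antisymm (by exact_mod_cast hle_one) her1, fun k hk hkr => ?_⟩
  have hsum_le : ∑ k ∈ s, (e k : R) * b k ≤ e r * b r :=
    h ▸ le_mul_of_one_le_left (hb r).le (Nat.one_le_cast.mpr her1)
  by_contra hek
  exact (mul_pos (Nat.cast_pos.mpr (Nat.pos_of_ne_zero hek)) (hb k)).ne'
    (eq_zero_of_sum_le_single hterm hr hsum_le hk hkr)

theorem strictMonoOn_Ici_one_of_mul_lt {b : ℕ → R} {n : ℕ → ℕ} (hb : ∀ l, 0 ≤ b l)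
    (hn : ∀ l, 1 ≤ l → 1 ≤ n l) (hgrow : ∀ l, 1 ≤ l → (n l : R) * b l < b (l + 1)) :
    StrictMonoOn b (Set.Ici 1) :=
  strictMonoOn_of_lt_add_one Set.ordConnected_Ici fun l _ hl _ =>
    (le_mul_of_one_le_left (hb l) (Nat.one_le_cast.mpr (hn l hl))).trans_lt (hgrow l hl)

end PositiveWeights

theorem ne_sum_of_one_lt_min {b : ℕ → ℚ} {d n : ℕ}
    (hmin : ∀ q : ℕ, 0 < q →
      (∃ c : ℕ → ℤ, (q : ℚ) * b d = ∑ k ∈ range d, (c k : ℚ) * b k) → n ≤ q)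
    (hn : 1 < n) {s : Finset ℕ} (hs : s ⊆ range d) (c : ℕ → ℤ) :
    b d ≠ ∑ k ∈ s, (c k : ℚ) * b k := by
  intro h
  refine (hmin 1 one_pos ⟨fun k => if k ∈ s then c k else 0, ?_⟩).not_gt hn
  simp only [Nat.cast_one, one_mul, Int.cast_ite, Int.cast_zero, ite_mul, zero_mul,
    sum_ite_mem, inter_eq_right.mpr hs, h]

theorem stmt_17_general (b : ℕ → ℚ) (hpos : ∀ l, 0 < b l) (nbar : ℕ → ℕ)
    (hmin : ∀ l, 1 ≤ l → ∀ q : ℕ, 0 < q →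
      (∃ c : ℕ → ℤ, (q : ℚ) * b l = ∑ k ∈ Finset.range l, (c k : ℚ) * b k) → nbar l ≤ q)
    (hgt1 : ∀ l, 1 ≤ l → 1 < nbar l)
    (hgrow : ∀ l, 1 ≤ l → (nbar l : ℚ) * b l < b (l + 1))
    (d : ℕ) (hd : 1 ≤ d) (l r : ℕ) (jj : ℕ → ℕ) (hjr : jj r ≠ 0)
    (heq : b d = (l : ℚ) * b 0 + ∑ k ∈ Finset.Icc 1 r, (jj k : ℚ) * b k) :
    r = d ∧ jj d = 1 ∧ l = 0 ∧ ∀ k, 1 ≤ k → k ≤ r → k ≠ d → jj k = 0 := by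
  set e := Function.update jj 0 l
  have he0 : e 0 = l := Function.update_self _ _ _
  have he : ∀ k, 1 ≤ k → e k = jj k := fun k hk => Function.update_of_ne (by omega) _ _
  have hsum : b d = ∑ k ∈ range (r + 1), (e k : ℚ) * b k := by
    rw [sum_range_add_one_eq_add_sum_Icc, heq, he0]
    exact congrArg _ (sum_congr rfl fun k hk => by rw [he k (mem_Icc.mp hk).1])
  have hdr : d ≤ r := not_lt.mp fun hlt => ne_sum_of_one_lt_min (hmin d hd) (hgt1 d hd)
    (range_subset_range.mpr hlt) (fun k => e k) hsum
  have hr : 1 ≤ r := hd.trans hdr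
  have her : e r ≠ 0 := he r hr ▸ hjr
  have hbr : b r ≤ b d :=
    hsum ▸ le_sum_natCast_mul_of_ne_zero (fun k => (hpos k).le) (self_mem_range_succ r) her
  have hmono := strictMonoOn_Ici_one_of_mul_lt (fun l => (hpos l).le)
    (fun l hl => (hgt1 l hl).le) hgrow
  obtain rfl : r = d := le_antisymm ((hmono.le_iff_le hr hd).mp hbr) hdr
  obtain ⟨her1, hzero⟩ :=
    eq_one_and_eq_zero_of_eq_sum_natCast_mul hpos (self_mem_range_succ r) her hsum
  exact ⟨rfl, he r hr ▸ her1, he0 ▸ hzero 0 (by simp) (by omega),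
    fun k hk hkr hkd => he k hk ▸ hzero k (mem_range_succ_iff.mpr hkr) hkd⟩

/-- minimal generating relations in the semigroup generated by a sequence
`(β_l)` of positive rationals with `n̄_l > 1` and `β_{l+1} > n̄_l β_l` for `l ≥ 1`. -/
theorem stmt_17 (b : ℕ → ℚ) (hpos : ∀ l, 0 < b l) (nbar : ℕ → ℕ)
    (hmem : ∀ l, 1 ≤ l → ∃ c : ℕ → ℤ,
      (nbar l : ℚ) * b l = ∑ k ∈ Finset.range l, (c k : ℚ) * b k)
    (hmin : ∀ l, 1 ≤ l → ∀ q : ℕ, 0 < q →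
      (∃ c : ℕ → ℤ, (q : ℚ) * b l = ∑ k ∈ Finset.range l, (c k : ℚ) * b k) → nbar l ≤ q)
    (hgt1 : ∀ l, 1 ≤ l → 1 < nbar l)
    (hgrow : ∀ l, 1 ≤ l → (nbar l : ℚ) * b l < b (l + 1))
    (d : ℕ) (hd : 1 ≤ d) (l r : ℕ) (hr : 1 ≤ r) (jj : ℕ → ℕ) (hjr : jj r ≠ 0)
    (heq : b d = (l : ℚ) * b 0 + ∑ k ∈ Finset.Icc 1 r, (jj k : ℚ) * b k) :
    r = d ∧ jj d = 1 ∧ l = 0 ∧ ∀ k, 1 ≤ k → k ≤ r → k ≠ d → jj k = 0 :=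
  stmt_17_general b hpos nbar hmin hgt1 hgrow d hd l r jj hjr heq

end DuttaPaper
end
end
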